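/- arXiv:1205.6869 — 5 statements merged into one kernel-verified Lean document; each statement's English description precedes it below -/
import Mathlib

section
/- Let G be a 2-connected planar simple graph with Δ(G) ≥ 5 that contains none of the configurations (A1)–(A4), and let H be a component of the graph obtained from G by deleting all vertices of degree 2. Then the minimum degree of H is at least 3. -/
open SimpleGraph

/-- The degree of a vertex `v` of `G` (cardinality of its neighbor set). -/
noncomputable def deg {V : Type*} (G : SimpleGraph V) (v : V) : ℕ :=
  (G.neighborSet v).ncard

/-- The maximum degree `Δ(G)` of a finite graph `G`. -/
noncomputable def maxDeg {V : Type*} [Fintype V] (G : SimpleGraph V) : ℕ :=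
  Finset.univ.sup fun v => deg G v

/-- The number of neighbors of `u` in `G` whose degree is exactly `k`. -/
noncomputable def nDegEq {V : Type*} (G : SimpleGraph V) (u : V) (k : ℕ) : ℕ :=
  {w | w ∈ G.neighborSet u ∧ deg G w = k}.ncard

/-- The number of neighbors of `u` in `G` whose degree is at most `k`. -/
noncomputable def nDegLe {V : Type*} (G : SimpleGraph V) (u : V) (k : ℕ) : ℕ :=
  {w | w ∈ G.neighborSet u ∧ deg G w ≤ k}.ncard

/-- The number of neighbors of `u` in `G` whose degree is at least `k`. -/
noncomputable def nDegGe {V : Type*} (G : SimpleGraph V) (u : V) (k : ℕ) : ℕ :=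
  {w | w ∈ G.neighborSet u ∧ k ≤ deg G w}.ncard

/-- `H` is a minor of `G`: there is a family of pairwise disjoint connected branch sets
indexed by the vertices of `H`, with an edge of `G` between the branch sets of any two
adjacent vertices of `H`. -/
def IsMinorOf {W V : Type*} (H : SimpleGraph W) (G : SimpleGraph V) : Prop :=
  ∃ φ : W → Set V,
    (∀ w, (G.induce (φ w)).Connected) ∧
    (∀ w₁ w₂, w₁ ≠ w₂ → Disjoint (φ w₁) (φ w₂)) ∧
    ∀ ⦃w₁ w₂⦄, H.Adj w₁ w₂ → ∃ a ∈ φ w₁, ∃ b ∈ φ w₂, G.Adj a b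

/-- A graph is planar iff it can be embedded in the plane; by Wagner's theorem this is
equivalent to having neither a `K₅` nor a `K₃,₃` minor. -/
def IsPlanar {V : Type*} (G : SimpleGraph V) : Prop :=
  ¬ IsMinorOf (completeGraph (Fin 5)) G ∧
  ¬ IsMinorOf (completeBipartiteGraph (Fin 3) (Fin 3)) G

/-- A graph is 2-connected: it has at least 3 vertices and deleting any single vertex
leaves a connected graph. -/
def TwoConnected {V : Type*} [Fintype V] (G : SimpleGraph V) : Prop :=
  3 ≤ Fintype.card V ∧ ∀ v : V, (G.induce {w | w ≠ v}).Connected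

/-- A proper edge coloring: distinct edges sharing a vertex get different colors. -/
def ProperEdgeColoring {V α : Type*} (G : SimpleGraph V) (c : Sym2 V → α) : Prop :=
  ∀ e₁ ∈ G.edgeSet, ∀ e₂ ∈ G.edgeSet, e₁ ≠ e₂ → (∃ v, v ∈ e₁ ∧ v ∈ e₂) → c e₁ ≠ c e₂

/-- An acyclic edge coloring: a proper edge coloring with no bichromatic cycle. -/
def AcyclicEdgeColoring {V α : Type*} (G : SimpleGraph V) (c : Sym2 V → α) : Prop :=
  ProperEdgeColoring G c ∧
  ∀ (v : V) (w : G.Walk v v), w.IsCycle →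
    ¬ ∃ i j : α, ∀ e ∈ w.edges, c e = i ∨ c e = j

/-- Configuration (A₁): a path `u v w` with `d(v) = 2` and `d(u) ≤ 9`. -/
def ConfigA1 {V : Type*} (G : SimpleGraph V) : Prop :=
  ∃ u v w : V, G.Adj u v ∧ G.Adj v w ∧ u ≠ w ∧ deg G v = 2 ∧ deg G u ≤ 9

/-- Configuration (A₂). -/
def ConfigA2 {V : Type*} (G : SimpleGraph V) : Prop :=
  ∃ u : V, 1 ≤ nDegEq G u 2 ∧
    ((deg G u : ℤ) - 7 ≤ (nDegLe G u 8 : ℤ) ∨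
     ((nDegLe G u 8 : ℤ) = (deg G u : ℤ) - 8 ∧ (deg G u : ℤ) - 9 ≤ (nDegEq G u 2 : ℤ)))

/-- Configuration (A₃). -/
def ConfigA3 {V : Type*} (G : SimpleGraph V) : Prop :=
  ∃ u v : V, G.Adj u v ∧ deg G u = 3 ∧
    (deg G v ≤ 8 ∨
     (deg G v = 9 ∧ ∃ w, G.Adj u w ∧ G.Adj v w) ∨
     (deg G v = 10 ∧ 5 ≤ nDegLe G v 5 ∧
       ∃ w₁ w₂, w₁ ≠ w₂ ∧ G.Adj u w₁ ∧ G.Adj v w₁ ∧ G.Adj u w₂ ∧ G.Adj v w₂))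

/-- Configuration (A₄). -/
def ConfigA4 {V : Type*} (G : SimpleGraph V) : Prop :=
  (∃ v u v₂ v₃ v₄ : V,
     deg G v = 4 ∧
     G.Adj v u ∧ G.Adj v v₂ ∧ G.Adj v v₃ ∧ G.Adj v v₄ ∧
     ([u, v₂, v₃, v₄] : List V).Pairwise (· ≠ ·) ∧
     deg G u ≤ deg G v₂ ∧ deg G v₂ ≤ deg G v₃ ∧ deg G v₃ ≤ deg G v₄ ∧
     4 ≤ deg G u ∧ deg G u ≤ 7 ∧ deg G u + deg G v₂ ≤ 17) ∨
  (∃ v u v₂ v₃ v₄ v₅ : V,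
     deg G v = 5 ∧
     G.Adj v u ∧ G.Adj v v₂ ∧ G.Adj v v₃ ∧ G.Adj v v₄ ∧ G.Adj v v₅ ∧
     ([u, v₂, v₃, v₄, v₅] : List V).Pairwise (· ≠ ·) ∧
     deg G u ≤ deg G v₂ ∧ deg G v₂ ≤ deg G v₃ ∧ deg G v₃ ≤ deg G v₄ ∧
       deg G v₄ ≤ deg G v₅ ∧
     ((4 ≤ deg G u ∧ deg G u ≤ 6 ∧ deg G u + deg G v₂ + deg G v₃ ≤ 18) ∨
      (deg G u = 6 ∧ deg G v₂ = 6 ∧ deg G v₃ = 7 ∧ deg G v₄ = 7 ∧ deg G v₅ = 7 ∧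
        G.Adj u v₅)))

/-
If `u` has a neighbor of degree 2, excluding (A2.1) leaves at least 8 neighbors of degree at
least 9, and those survive the deletion. Otherwise `u` keeps all its neighbors, and 2-connectivity
gives `d(u) ≥ 2`, hence `d(u) ≥ 3`.
-/

section Degree

variable {V : Type*} (G : SimpleGraph V)

lemma deg_induce_eq_ncard_inter (S : Set V) {u : V} (hu : u ∈ S) :
    deg (G.induce S) ⟨u, hu⟩ = (G.neighborSet u ∩ S).ncard := by
  rw [deg, ← Set.ncard_image_of_injective _ Subtype.val_injective]
  congr 1
  ext w
  constructor
  · rintro ⟨b, hb, rfl⟩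
    exact ⟨hb, b.2⟩
  · rintro ⟨hw, hwS⟩
    exact ⟨⟨w, hwS⟩, hw, rfl⟩

lemma deg_eq_deg_induce_add_nDegEq [Finite V] (k : ℕ) {u : V} (hu : u ∈ {v | deg G v ≠ k}) :
    deg G u = deg (G.induce {v | deg G v ≠ k}) ⟨u, hu⟩ + nDegEq G u k := by
  rw [deg_induce_eq_ncard_inter, deg, nDegEq,
    ← Set.ncard_inter_add_ncard_sdiff_eq_ncard (G.neighborSet u) {v | deg G v ≠ k}]
  congr 2
  ext w
  simp [and_comm]

lemma nDegEq_le_nDegLe [Finite V] (u : V) {k l : ℕ} (hkl : k ≤ l) :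
    nDegEq G u k ≤ nDegLe G u l :=
  Set.ncard_le_ncard (fun _ ⟨hw, hwk⟩ ↦ ⟨hw, hwk ▸ hkl⟩)

lemma nDegLe_add_eight_le_deg_of_not_configA2 (hA2 : ¬ ConfigA2 G) {u : V}
    (hu : 1 ≤ nDegEq G u 2) : nDegLe G u 8 + 8 ≤ deg G u := by
  have h : ¬ ((deg G u : ℤ) - 7 ≤ nDegLe G u 8) := fun h ↦ hA2 ⟨u, hu, Or.inl h⟩
  omega

end Degree

section TwoConnected

variable {V : Type*} [Fintype V] {G : SimpleGraph V}

lemma TwoConnected.exists_adj_ne (h2 : TwoConnected G) {u x : V} (hxu : x ≠ u) :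
    ∃ a, G.Adj u a ∧ a ≠ x := by
  classical
  obtain ⟨y, -, hy⟩ := Finset.exists_mem_notMem_of_card_lt_card
    (s := {u, x}) (t := Finset.univ) ((Finset.card_le_two).trans_lt h2.1)
  simp only [Finset.mem_insert, Finset.mem_singleton, not_or] at hy
  have hreach := (h2.2 x).preconnected ⟨u, hxu.symm⟩ ⟨y, hy.2⟩
  obtain ⟨⟨a, hax⟩, hua⟩ := hreach.nonempty_neighborSet_left (by simpa using Ne.symm hy.1)
  exact ⟨a, hua, hax⟩

lemma TwoConnected.two_le_deg (h2 : TwoConnected G) (u : V) : 2 ≤ deg G u := by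
  obtain ⟨x, hxu⟩ := Fintype.exists_ne_of_one_lt_card (by linarith [h2.1]) u
  obtain ⟨a, hua, hax⟩ := h2.exists_adj_ne hxu
  obtain ⟨b, hub, hba⟩ := h2.exists_adj_ne (G.ne_of_adj hua).symm
  rw [deg, ← Set.ncard_pair hba]
  exact Set.ncard_le_ncard (Set.pair_subset hub hua)

end TwoConnected

theorem claim_min_degree_general {V : Type*} [Fintype V] (G : SimpleGraph V)
    (h2 : TwoConnected G) (hA2 : ¬ ConfigA2 G) :
    ∀ u : ↥{v : V | deg G v ≠ 2}, 3 ≤ deg (G.induce {v : V | deg G v ≠ 2}) u := by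
  rintro ⟨u, hu⟩
  have hsplit := deg_eq_deg_induce_add_nDegEq G 2 hu
  have hu2 : deg G u ≠ 2 := hu
  rcases Nat.eq_zero_or_pos (nDegEq G u 2) with h0 | hpos
  · have := h2.two_le_deg u
    omega
  · have := nDegLe_add_eight_le_deg_of_not_configA2 G hA2 hpos
    have := nDegEq_le_nDegLe G u (show 2 ≤ 8 by norm_num)
    omega

theorem claim_min_degree {V : Type*} [Fintype V] (G : SimpleGraph V)
    (h2 : TwoConnected G) (hplanar : IsPlanar G) (hΔ : 5 ≤ maxDeg G)
    (hA1 : ¬ ConfigA1 G) (hA2 : ¬ ConfigA2 G) (hA3 : ¬ ConfigA3 G) (hA4 : ¬ ConfigA4 G) :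
    ∀ u : ↥{v : V | deg G v ≠ 2}, 3 ≤ deg (G.induce {v : V | deg G v ≠ 2}) u :=
  claim_min_degree_general G h2 hA2
end

section
/- Let G be a 2-connected planar simple graph with Δ(G) ≥ 5 that contains none of the configurations (A1)–(A4), and let H be a component of the graph obtained from G by deleting all vertices of degree 2. Then for every vertex u of H with d_H(u) ≤ 8, one has d(u) = d_H(u). -/
open SimpleGraph

theorem claim_degree_eq {V : Type*} [Fintype V] (G : SimpleGraph V)
    (h2 : TwoConnected G) (hplanar : IsPlanar G) (hΔ : 5 ≤ maxDeg G)
    (hA1 : ¬ ConfigA1 G) (hA2 : ¬ ConfigA2 G) (hA3 : ¬ ConfigA3 G) (hA4 : ¬ ConfigA4 G) :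
    ∀ u : ↥{v : V | deg G v ≠ 2},
      deg (G.induce {v : V | deg G v ≠ 2}) u ≤ 8 →
      deg G ↑u = deg (G.induce {v : V | deg G v ≠ 2}) u := by
  intro u hH
  classical
  by_contra hne
  have himg : (Subtype.val '' ((G.induce {v : V | deg G v ≠ 2}).neighborSet u)) =
      {w | w ∈ G.neighborSet (↑u) ∧ deg G w ≠ 2} := by
    ext w
    constructor
    · rintro ⟨w', hw', rfl⟩
      exact ⟨hw', w'.2⟩
    · rintro ⟨hw1, hw2⟩
      exact ⟨⟨w, hw2⟩, hw1, rfl⟩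
  have hDeq : deg (G.induce {v : V | deg G v ≠ 2}) u =
      ({w | w ∈ G.neighborSet (↑u) ∧ deg G w ≠ 2} : Set V).ncard := by
    rw [← himg, Set.ncard_image_of_injective _ Subtype.val_injective]
    rfl
  have hunion : G.neighborSet (↑u) =
      {w | w ∈ G.neighborSet (↑u) ∧ deg G w = 2} ∪
      {w | w ∈ G.neighborSet (↑u) ∧ deg G w ≠ 2} := by
    ext w
    by_cases h : deg G w = 2 <;> simp [h]
  have hdisj : Disjoint {w | w ∈ G.neighborSet (↑u) ∧ deg G w = 2}
      {w | w ∈ G.neighborSet (↑u) ∧ deg G w ≠ 2} := by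
    rw [Set.disjoint_left]
    rintro w ⟨_, h2⟩ ⟨_, hn2⟩
    exact hn2 h2
  have hsplit : deg G ↑u = nDegEq G (↑u) 2 +
      ({w | w ∈ G.neighborSet (↑u) ∧ deg G w ≠ 2} : Set V).ncard := by
    show (G.neighborSet ↑u).ncard = _
    conv_lhs => rw [hunion]
    exact Set.ncard_union_eq hdisj (Set.toFinite _) (Set.toFinite _)
  rw [hDeq] at hne hH
  have hpos : 1 ≤ nDegEq G (↑u) 2 := by omega
  have hle : nDegEq G (↑u) 2 ≤ nDegLe G (↑u) 8 := by
    apply Set.ncard_le_ncard _ (Set.toFinite _)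
    rintro w ⟨hw1, hw2⟩
    exact ⟨hw1, by omega⟩
  exact hA2 ⟨↑u, hpos, by omega⟩
end

section
/- Let G be a 2-connected planar simple graph with Δ(G) ≥ 5 that contains none of the configurations (A1)–(A4), and let H be a component of the graph obtained from G by deleting all vertices of degree 2. If u is a vertex of H with d_H(u) = 9 that has at least one neighbor in H of H-degree at most 8, then d(u) = 9. -/
open SimpleGraph

section MyAux

variable {V : Type*} [Fintype V] (G : SimpleGraph V)

/-- The `G`-degree of a vertex of `H = G - {deg = 2}` splits as the `H`-degree plus
the number of degree-2 neighbors. -/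
lemma my_deg_split (v : ↥{v : V | deg G v ≠ 2}) :
    deg G ↑v = deg (G.induce {v : V | deg G v ≠ 2}) v + nDegEq G ↑v 2 := by
  classical
  let S : Set V := {v : V | deg G v ≠ 2}
  have himg : Subtype.val '' ((G.induce S).neighborSet v)
      = {x : V | G.Adj ↑v x ∧ x ∈ S} := by
    ext x
    simp only [Set.mem_image, mem_neighborSet, Set.mem_setOf_eq, comap_adj,
      Function.Embedding.coe_subtype]
    constructor
    · rintro ⟨w, hw, rfl⟩
      exact ⟨hw, w.2⟩
    · rintro ⟨hadj, hx⟩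
      exact ⟨⟨x, hx⟩, hadj, rfl⟩
  have h2 : deg (G.induce S) v = {x : V | G.Adj ↑v x ∧ x ∈ S}.ncard := by
    rw [← himg, Set.ncard_image_of_injective _ Subtype.val_injective]
    rfl
  have h3 : G.neighborSet ↑v
      = {x : V | G.Adj ↑v x ∧ x ∈ S} ∪ {x | x ∈ G.neighborSet ↑v ∧ deg G x = 2} := by
    ext x
    simp only [Set.mem_union, Set.mem_setOf_eq, mem_neighborSet, S]
    tauto
  have hdisj : Disjoint {x : V | G.Adj ↑v x ∧ x ∈ S}
      {x | x ∈ G.neighborSet ↑v ∧ deg G x = 2} := by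
    rw [Set.disjoint_left]
    rintro x ⟨_, hx⟩ ⟨_, hx2⟩
    exact hx hx2
  have : deg G ↑v = ({x : V | G.Adj ↑v x ∧ x ∈ S}
      ∪ {x | x ∈ G.neighborSet ↑v ∧ deg G x = 2}).ncard := by
    rw [← h3]; rfl
  rw [this, Set.ncard_union_eq hdisj (Set.toFinite _) (Set.toFinite _), h2]
  rfl

lemma my_n2_zero (hA1 : ¬ ConfigA1 G) (v : V) (hv : deg G v ≤ 9) :
    nDegEq G v 2 = 0 := by
  by_contra h
  have hne : {w | w ∈ G.neighborSet v ∧ deg G w = 2}.Nonempty :=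
    Set.nonempty_of_ncard_ne_zero h
  obtain ⟨x, hx, hdx⟩ := hne
  have hx' : G.Adj v x := hx
  have h1 : 1 < (G.neighborSet x).ncard := by
    have : (G.neighborSet x).ncard = deg G x := rfl
    omega
  obtain ⟨y, hy, hyv⟩ := Set.exists_ne_of_one_lt_ncard h1 v
  exact hA1 ⟨v, x, y, hx', hy, hyv.symm, hdx, hv⟩

lemma my_le1 (v : V) : nDegEq G v 2 ≤ nDegLe G v 8 :=
  Set.ncard_le_ncard (by rintro x ⟨h1, h2⟩; exact ⟨h1, by omega⟩) (Set.toFinite _)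

lemma my_le2 (v w : V) (hadj : G.Adj v w) (h8 : deg G w ≤ 8) (h2 : deg G w ≠ 2) :
    nDegEq G v 2 + 1 ≤ nDegLe G v 8 := by
  have hw : w ∉ {x | x ∈ G.neighborSet v ∧ deg G x = 2} := by
    rintro ⟨_, hx⟩; exact h2 hx
  have hins : (insert w {x | x ∈ G.neighborSet v ∧ deg G x = 2}).ncard
      = nDegEq G v 2 + 1 := Set.ncard_insert_of_notMem hw (Set.toFinite _)
  have hsub : insert w {x | x ∈ G.neighborSet v ∧ deg G x = 2}
      ⊆ {x | x ∈ G.neighborSet v ∧ deg G x ≤ 8} := by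
    rintro x (rfl | ⟨h1, h2⟩)
    · exact ⟨hadj, h8⟩
    · exact ⟨h1, by omega⟩
  calc nDegEq G v 2 + 1 = _ := hins.symm
    _ ≤ nDegLe G v 8 := Set.ncard_le_ncard hsub (Set.toFinite _)

end MyAux

theorem claim_nine_vertex {V : Type*} [Fintype V] (G : SimpleGraph V)
    (h2 : TwoConnected G) (hplanar : IsPlanar G) (hΔ : 5 ≤ maxDeg G)
    (hA1 : ¬ ConfigA1 G) (hA2 : ¬ ConfigA2 G) (hA3 : ¬ ConfigA3 G) (hA4 : ¬ ConfigA4 G) :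
    ∀ u : ↥{v : V | deg G v ≠ 2},
      deg (G.induce {v : V | deg G v ≠ 2}) u = 9 →
      (∃ w, (G.induce {v : V | deg G v ≠ 2}).Adj u w ∧
        deg (G.induce {v : V | deg G v ≠ 2}) w ≤ 8) →
      deg G ↑u = 9 := by
  rintro u h9 ⟨w, hadjH, hw8⟩
  have hdu := my_deg_split G u
  rw [h9] at hdu
  by_contra hne
  have hn2u : 1 ≤ nDegEq G ↑u 2 := by omega
  have hadjG : G.Adj ↑u ↑w := hadjH
  have hdw := my_deg_split G w
  rcases le_or_gt (deg G ↑w) 9 with hle | hgt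
  · have hz : nDegEq G ↑w 2 = 0 := my_n2_zero G hA1 ↑w hle
    have hw8' : deg G ↑w ≤ 8 := by omega
    have hwne2 : deg G ↑w ≠ 2 := w.2
    have key := my_le2 G ↑u ↑w hadjG hw8' hwne2
    exact hA2 ⟨↑u, hn2u, by omega⟩
  · have key := my_le1 G ↑w
    exact hA2 ⟨↑w, by omega, by omega⟩
end

section
/- Let G be a 2-connected planar simple graph with Δ(G) ≥ 5 that contains none of the configurations (A1)–(A4), and let H be a component of the graph obtained from G by deleting all vertices of degree 2. If u is a vertex of H with d_H(u) ≥ 10 and d(u) ≠ d_H(u), then n_3(u) + n_4(u) + n_5(u) ≤ d_H(u) − 8. -/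
open SimpleGraph

theorem claim_ten_plus {V : Type*} [Fintype V] (G : SimpleGraph V)
    (h2 : TwoConnected G) (hplanar : IsPlanar G) (hΔ : 5 ≤ maxDeg G)
    (hA1 : ¬ ConfigA1 G) (hA2 : ¬ ConfigA2 G) (hA3 : ¬ ConfigA3 G) (hA4 : ¬ ConfigA4 G) :
    ∀ u : ↥{v : V | deg G v ≠ 2},
      10 ≤ deg (G.induce {v : V | deg G v ≠ 2}) u →
      deg G ↑u ≠ deg (G.induce {v : V | deg G v ≠ 2}) u →
      nDegEq G ↑u 3 + nDegEq G ↑u 4 + nDegEq G ↑u 5 ≤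
        deg (G.induce {v : V | deg G v ≠ 2}) u - 8 := by
  intro u hdH hne
  classical
  have hdisj2 : ∀ (P Q : V → Prop), (∀ w, P w → Q w → False) →
      Disjoint {w | w ∈ G.neighborSet (↑u : V) ∧ P w}
        {w | w ∈ G.neighborSet (↑u : V) ∧ Q w} := by
    intro P Q h
    rw [Set.disjoint_left]
    rintro w ⟨_, hp⟩ ⟨_, hq⟩
    exact h w hp hq
  have hval : deg (G.induce {v : V | deg G v ≠ 2}) u =
      {w | w ∈ G.neighborSet (↑u : V) ∧ deg G w ≠ 2}.ncard := by
    unfold deg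
    have himg : Subtype.val '' ((G.induce {v : V | deg G v ≠ 2}).neighborSet u) =
        {w | w ∈ G.neighborSet (↑u : V) ∧ deg G w ≠ 2} := by
      ext w
      simp only [Set.mem_image, SimpleGraph.mem_neighborSet, Set.mem_setOf_eq]
      constructor
      · rintro ⟨⟨w', hw'⟩, hadj, rfl⟩
        exact ⟨hadj, hw'⟩
      · rintro ⟨hadj, hw⟩
        exact ⟨⟨w, hw⟩, hadj, rfl⟩
    have hinj := Set.ncard_image_of_injective
      ((G.induce {v : V | deg G v ≠ 2}).neighborSet u) Subtype.val_injective
    rw [himg] at hinj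
    exact hinj.symm
  have hpart : deg G (↑u : V) = nDegEq G (↑u : V) 2 +
      {w | w ∈ G.neighborSet (↑u : V) ∧ deg G w ≠ 2}.ncard := by
    unfold deg nDegEq
    rw [← Set.ncard_union_eq (hdisj2 _ _ (fun w h h' => h' h))
      (Set.toFinite _) (Set.toFinite _)]
    congr 1
    ext w
    simp only [Set.mem_union, Set.mem_setOf_eq, SimpleGraph.mem_neighborSet]
    tauto
  have hsum : nDegEq G (↑u : V) 2 + nDegEq G (↑u : V) 3 + nDegEq G (↑u : V) 4 +
      nDegEq G (↑u : V) 5 ≤ nDegLe G (↑u : V) 8 := by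
    unfold nDegEq nDegLe
    have key : ∀ k : ℕ, k ≤ 8 → ∀ T : Set V,
        T ⊆ {w | w ∈ G.neighborSet (↑u : V) ∧ deg G w ≤ 8} →
        Disjoint T {w | w ∈ G.neighborSet (↑u : V) ∧ deg G w = k} →
        T.ncard + {w | w ∈ G.neighborSet (↑u : V) ∧ deg G w = k}.ncard ≤
          {w | w ∈ G.neighborSet (↑u : V) ∧ deg G w ≤ 8}.ncard := by
      intro k hk T hT hTk
      rw [← Set.ncard_union_eq hTk (Set.toFinite _) (Set.toFinite _)]
      apply Set.ncard_le_ncard _ (Set.toFinite _)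
      rintro w (hw | ⟨hw1, hw2⟩)
      · exact hT hw
      · exact ⟨hw1, hw2 ▸ hk⟩
    have h2345 : ({w | w ∈ G.neighborSet (↑u : V) ∧ deg G w = 2} ∪
        {w | w ∈ G.neighborSet (↑u : V) ∧ deg G w = 3} ∪
        {w | w ∈ G.neighborSet (↑u : V) ∧ deg G w = 4}).ncard =
        {w | w ∈ G.neighborSet (↑u : V) ∧ deg G w = 2}.ncard +
        {w | w ∈ G.neighborSet (↑u : V) ∧ deg G w = 3}.ncard +
        {w | w ∈ G.neighborSet (↑u : V) ∧ deg G w = 4}.ncard := by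
      have d23 := hdisj2 (fun w => deg G w = 2) (fun w => deg G w = 3) (by intro w h h'; omega)
      have d234 : Disjoint ({w | w ∈ G.neighborSet (↑u : V) ∧ deg G w = 2} ∪
          {w | w ∈ G.neighborSet (↑u : V) ∧ deg G w = 3})
          {w | w ∈ G.neighborSet (↑u : V) ∧ deg G w = 4} := by
        rw [Set.disjoint_left]
        rintro w (⟨_, h⟩ | ⟨_, h⟩) ⟨_, h'⟩ <;> omega
      rw [Set.ncard_union_eq d234 (Set.toFinite _) (Set.toFinite _),
          Set.ncard_union_eq d23 (Set.toFinite _) (Set.toFinite _)]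
    have hk5 := key 5 (by norm_num)
      ({w | w ∈ G.neighborSet (↑u : V) ∧ deg G w = 2} ∪
       {w | w ∈ G.neighborSet (↑u : V) ∧ deg G w = 3} ∪
       {w | w ∈ G.neighborSet (↑u : V) ∧ deg G w = 4}) ?_ ?_
    · omega
    · rintro w ((⟨hw, h⟩ | ⟨hw, h⟩) | ⟨hw, h⟩) <;> exact ⟨hw, by omega⟩
    · rw [Set.disjoint_left]
      rintro w ((⟨_, h⟩ | ⟨_, h⟩) | ⟨_, h⟩) ⟨_, h'⟩ <;> omega
  have hn2pos : 1 ≤ nDegEq G (↑u : V) 2 := by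
    rw [hval] at hne
    omega
  rw [ConfigA2] at hA2
  push_neg at hA2
  obtain ⟨h1, h2⟩ := hA2 (↑u : V) hn2pos
  rw [hval] at hdH ⊢
  by_cases hcase : (nDegLe G (↑u : V) 8 : ℤ) = (deg G (↑u : V) : ℤ) - 8
  · have h3 := h2 hcase
    omega
  · omega
end

section
/- Let G be a 2-connected planar simple graph with Δ(G) ≥ 5 that contains none of the configurations (A1)–(A4), and let H be a component of the graph obtained from G by deleting all vertices of degree 2. If u is a vertex of H with 3 ≤ d(u) ≤ 8, then the number of neighbors of u in H of H-degree at least 10 equals the number of neighbors of u in G of G-degree at least 10, i.e., n'_{10^+}(u) = n_{10^+}(u). -/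
open SimpleGraph

private lemma deg_induce_eq {V : Type*} (G : SimpleGraph V) (S : Set V) (w : S) :
    deg (G.induce S) w = {x | x ∈ G.neighborSet (w : V) ∧ x ∈ S}.ncard := by
  have h : Subtype.val '' ((G.induce S).neighborSet w)
      = {x | x ∈ G.neighborSet (w : V) ∧ x ∈ S} := by
    ext x
    simp only [Set.mem_image, SimpleGraph.mem_neighborSet, Set.mem_setOf_eq, SimpleGraph.comap_adj,
      Function.Embedding.coe_subtype]
    constructor
    · rintro ⟨y, hy, rfl⟩; exact ⟨hy, y.2⟩
    · rintro ⟨hadj, hx⟩; exact ⟨⟨x, hx⟩, hadj, rfl⟩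
  rw [deg, ← h, Set.ncard_image_of_injective _ Subtype.val_injective]

theorem claim_ten_plus_count {V : Type*} [Fintype V] (G : SimpleGraph V)
    (h2 : TwoConnected G) (hplanar : IsPlanar G) (hΔ : 5 ≤ maxDeg G)
    (hA1 : ¬ ConfigA1 G) (hA2 : ¬ ConfigA2 G) (hA3 : ¬ ConfigA3 G) (hA4 : ¬ ConfigA4 G) :
    ∀ u : ↥{v : V | deg G v ≠ 2},
      3 ≤ deg G ↑u → deg G ↑u ≤ 8 →
      {w | w ∈ (G.induce {v : V | deg G v ≠ 2}).neighborSet u ∧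
        10 ≤ deg (G.induce {v : V | deg G v ≠ 2}) w}.ncard = nDegGe G ↑u 10 := by
  set S : Set V := {v : V | deg G v ≠ 2} with hS
  intro u h3 h8
  -- key: if w is a neighbor of u with deg G w ≥ 10, then at least 10 neighbors of w avoid degree 2
  have key : ∀ w : V, G.Adj (↑u) w → 10 ≤ deg G w →
      10 ≤ {x | x ∈ G.neighborSet w ∧ x ∈ S}.ncard := by
    intro w hadj hdw
    set A : Set V := {x | x ∈ G.neighborSet w ∧ deg G x = 2} with hA
    set B : Set V := {x | x ∈ G.neighborSet w ∧ x ∈ S} with hB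
    have hunion : A ∪ B = G.neighborSet w := by
      ext x
      simp only [hA, hB, hS, Set.mem_union, Set.mem_setOf_eq]
      tauto
    have hdisj : Disjoint A B := by
      rw [Set.disjoint_left]
      rintro x ⟨_, hx2⟩ ⟨_, hxS⟩
      exact hxS hx2
    have hsplit : A.ncard + B.ncard = deg G w := by
      rw [deg, ← hunion, Set.ncard_union_eq hdisj (Set.toFinite A) (Set.toFinite B)]
    by_cases hAe : A = ∅
    · rw [hAe] at hsplit
      simp only [Set.ncard_empty, zero_add] at hsplit
      omega
    · -- A nonempty, use ¬ConfigA2 at w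
      have hApos : 1 ≤ A.ncard := by
        rw [Nat.one_le_iff_ne_zero]
        intro h0
        exact hAe ((Set.ncard_eq_zero (Set.toFinite A)).mp h0)
      have hn2 : nDegEq G w 2 = A.ncard := rfl
      -- u together with A are all neighbors of w of degree ≤ 8
      have huA : (↑u : V) ∉ A := by
        rintro ⟨_, hu2⟩
        omega
      have hins : insert (↑u : V) A ⊆ {x | x ∈ G.neighborSet w ∧ deg G x ≤ 8} := by
        rintro x (rfl | ⟨hxn, hx2⟩)
        · exact ⟨hadj.symm, h8⟩
        · exact ⟨hxn, by omega⟩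
      have hcard : A.ncard + 1 ≤ nDegLe G w 8 := by
        have h1 : (insert (↑u : V) A).ncard = A.ncard + 1 :=
          Set.ncard_insert_of_notMem huA (Set.toFinite A)
        have h2 := Set.ncard_le_ncard hins (Set.toFinite _)
        rw [h1] at h2
        exact h2
      have hA2w := hA2
      rw [ConfigA2] at hA2w
      push_neg at hA2w
      obtain ⟨hP, hQ⟩ := hA2w w (by rw [hn2]; exact hApos)
      rw [hn2] at hQ
      rcases eq_or_ne ((nDegLe G w 8 : ℤ)) ((deg G w : ℤ) - 8) with heq | hne
      · have := hQ heq
        have hle : nDegLe G w 8 ≤ deg G w := by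
          apply Set.ncard_le_ncard _ (Set.toFinite _)
          rintro x ⟨hx, _⟩
          exact hx
        omega
      -- arithmetic
      have hle : nDegLe G w 8 ≤ deg G w := by
        apply Set.ncard_le_ncard _ (Set.toFinite _)
        rintro x ⟨hx, _⟩
        exact hx
      omega
  -- the image of the target set under Subtype.val
  have himg : Subtype.val '' {w : S | w ∈ (G.induce S).neighborSet u ∧
        10 ≤ deg (G.induce S) w}
      = {x | x ∈ G.neighborSet (↑u : V) ∧ 10 ≤ deg G x} := by
    ext x
    simp only [Set.mem_image, Set.mem_setOf_eq, SimpleGraph.mem_neighborSet]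
    constructor
    · rintro ⟨y, ⟨hyn, hyd⟩, rfl⟩
      refine ⟨hyn, le_trans hyd ?_⟩
      rw [deg_induce_eq]
      apply Set.ncard_le_ncard _ (Set.toFinite _)
      rintro z ⟨hz, _⟩
      exact hz
    · rintro ⟨hadj, hdx⟩
      have hxS : x ∈ S := by
        simp only [hS, Set.mem_setOf_eq]
        omega
      refine ⟨⟨x, hxS⟩, ⟨hadj, ?_⟩, rfl⟩
      rw [deg_induce_eq]
      exact key x hadj hdx
  calc {w : S | w ∈ (G.induce S).neighborSet u ∧ 10 ≤ deg (G.induce S) w}.ncard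
      = (Subtype.val '' {w : S | w ∈ (G.induce S).neighborSet u ∧
          10 ≤ deg (G.induce S) w}).ncard :=
        (Set.ncard_image_of_injective _ Subtype.val_injective).symm
    _ = nDegGe G (↑u) 10 := by rw [himg]; rfl
end
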